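/- Let (X, d) be a pseudometric space, E a real normed vector space, L ≥ 0, and f : X → E a function satisfying ‖f(a) − f(b)‖ ≤ L · d(a, b) for all a, b ∈ X. Then for every n ∈ ℕ and all tuples x, y : Fin n → X: ‖ ∑_{i} f(x_i) − ∑_{i} f(y_i) ‖ ≤ L · W_d(x, y). -/
import Mathlib

open Finset

/-- Minimum matching cost between two equal-length tuples with ground cost `c`:
`W_c(x, y) = min_{σ ∈ S_n} ∑_i c(x_i, y_{σ(i)})`. -/
noncomputable def matchCost {α : Type*} (c : α → α → ℝ) {n : ℕ} (x y : Fin n → α) : ℝ :=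
  ⨅ σ : Equiv.Perm (Fin n), ∑ i, c (x i) (y (σ i))

/-- If `f : X → E` satisfies `‖f a − f b‖ ≤ L · d(a, b)`, then the induced
multiset (sum) function is `L`-Lipschitz with respect to the matching distance:
`‖∑_i f(x_i) − ∑_i f(y_i)‖ ≤ L * W_d(x, y)`. -/
theorem sum_lipschitz_matchDist {X : Type*} [PseudoMetricSpace X]
    {E : Type*} [NormedAddCommGroup E] [NormedSpace ℝ E]
    (L : ℝ) (hL : 0 ≤ L) (f : X → E)
    (hf : ∀ a b : X, ‖f a - f b‖ ≤ L * dist a b) :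
    ∀ (n : ℕ) (x y : Fin n → X),
      ‖∑ i, f (x i) - ∑ i, f (y i)‖ ≤ L * matchCost dist x y := by
  intro n x y
  rw [matchCost, Real.mul_iInf_of_nonneg hL]
  apply le_ciInf
  intro σ
  have hy : ∑ i, f (y i) = ∑ i, f (y (σ i)) := (Equiv.sum_comp σ fun i => f (y i)).symm
  rw [hy, ← Finset.sum_sub_distrib, Finset.mul_sum]
  exact (norm_sum_le _ _).trans (Finset.sum_le_sum fun i _ => hf _ _)
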